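/- arXiv:1802.09069 — 2 statements merged into one kernel-verified Lean document; each statement's English description precedes it below -/
import Mathlib

section
/- Second-moment bound for the multiple importance sampling estimator (Lemma B.8 of 'Active Learning with Logged Data'): In the fixed-policy MIS sampling model, for any two measurable classifiers h1, h2 : 𝒳 → {0,1}, E[ Σ_{i=1}^{m+n} ( 1{h1(X_i) ≠ h2(X_i)}·Z_i / (m·Q0(X_i) + n·Q1(X_i)) )² ] ≤ ρ(h1,h2) · sup_{x ∈ 𝒳} 1{h1(x) ≠ h2(x)} / (m·Q0(x) + n·Q1(x)), where the supremum is taken in the extended nonnegative reals [0,∞]. -/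
open MeasureTheory ProbabilityTheory ENNReal

/-- **Second-moment bound for the multiple importance sampling estimator**
(Lemma B.8 of "Active Learning with Logged Data").
In the fixed-policy MIS sampling model, for any two measurable classifiers
`h1, h2 : 𝒳 → {0,1}`,
`E[ Σᵢ ( 1{h1(Xᵢ) ≠ h2(Xᵢ)}·Zᵢ / (m·Q0(Xᵢ) + n·Q1(Xᵢ)) )² ]
   ≤ ρ(h1,h2) · sup_{x} 1{h1(x) ≠ h2(x)} / (m·Q0(x) + n·Q1(x))`,
the supremum being taken in `[0,∞]`. -/
theorem mis_second_moment_bound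
    {Ω 𝒳 : Type*} [MeasurableSpace Ω] [MeasurableSpace 𝒳]
    (P : Measure Ω) [IsProbabilityMeasure P]
    (D : Measure (𝒳 × Bool)) [IsProbabilityMeasure D]
    (Q0 Q1 : 𝒳 → ℝ) (hQ0meas : Measurable Q0) (hQ1meas : Measurable Q1)
    (hQ0 : ∀ x, Q0 x ∈ Set.Icc (0 : ℝ) 1) (hQ1 : ∀ x, Q1 x ∈ Set.Icc (0 : ℝ) 1)
    (m n : ℕ) (hm : 0 < m) (hn : 0 < n)
    (hw : ∀ x, 0 < m * Q0 x + n * Q1 x)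
    (X : Fin (m + n) → Ω → 𝒳) (Y Z : Fin (m + n) → Ω → Bool)
    (hX : ∀ i, Measurable (X i)) (hY : ∀ i, Measurable (Y i))
    (hZ : ∀ i, Measurable (Z i))
    (hindep : iIndepFun
      (fun i ω => (X i ω, Y i ω, Z i ω)) P)
    (hlaw : ∀ i, Measure.map (fun ω => (X i ω, Y i ω)) P = D)
    (hbern : ∀ i : Fin (m + n), ∀ B : Set (𝒳 × Bool), MeasurableSet B →
      P ((fun ω => (X i ω, Y i ω)) ⁻¹' B ∩ {ω | Z i ω = true})
        = ∫⁻ p in B,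
            ENNReal.ofReal (if (i : ℕ) < m then Q0 p.1 else Q1 p.1) ∂D)
    (h1 h2 : 𝒳 → Bool) (hh1 : Measurable h1) (hh2 : Measurable h2) :
    ∫⁻ ω, (∑ i : Fin (m + n),
        ((if h1 (X i ω) ≠ h2 (X i ω) ∧ Z i ω = true then (1 : ℝ≥0∞) else 0)
          / ENNReal.ofReal (m * Q0 (X i ω) + n * Q1 (X i ω))) ^ 2) ∂P
      ≤ D {p : 𝒳 × Bool | h1 p.1 ≠ h2 p.1}
        * ⨆ x : 𝒳, (if h1 x ≠ h2 x then (1 : ℝ≥0∞) else 0)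
            / ENNReal.ofReal (m * Q0 x + n * Q1 x) := by
  classical
  set W : 𝒳 → ℝ≥0∞ := fun x => ENNReal.ofReal (m * Q0 x + n * Q1 x) with hWdef
  set c : 𝒳 → ℝ≥0∞ := fun x => if h1 x ≠ h2 x then 1 else 0 with hcdef
  set S : ℝ≥0∞ := ⨆ x : 𝒳, c x / W x with hSdef
  have hWne : ∀ x, W x ≠ 0 := by
    intro x
    simp only [hWdef, ne_eq, ENNReal.ofReal_eq_zero, not_le]
    exact hw x
  have hWfin : ∀ x, W x ≠ ∞ := fun x => ENNReal.ofReal_ne_top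
  have hWmeas : Measurable W :=
    ((measurable_const.mul hQ0meas).add (measurable_const.mul hQ1meas)).ennreal_ofReal
  have hsmeas : MeasurableSet {p : 𝒳 × Bool | h1 p.1 ≠ h2 p.1} :=
    (measurableSet_eq_fun (hh1.comp measurable_fst)
      (hh2.comp measurable_fst)).compl
  have hcmeas : Measurable c := by
    have : c = Set.indicator {x | h1 x ≠ h2 x} (fun _ => (1 : ℝ≥0∞)) := by
      funext x; by_cases h : h1 x ≠ h2 x <;> simp [hcdef, h, Set.indicator]
    rw [this]
    exact measurable_const.indicator
      ((measurableSet_eq_fun hh1 hh2).compl)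
  -- the density function for index i
  set q : Fin (m + n) → 𝒳 → ℝ≥0∞ :=
    fun i x => ENNReal.ofReal (if (i : ℕ) < m then Q0 x else Q1 x) with hqdef
  have hqmeas : ∀ i, Measurable (q i) := by
    intro i
    by_cases h : (i : ℕ) < m <;> simp only [hqdef, h, if_true, if_false] <;>
      first
        | exact hQ0meas.ennreal_ofReal
        | exact hQ1meas.ennreal_ofReal
  -- change of variables: integral against (X i, Y i) on {Z i = true}
  have key : ∀ (i : Fin (m + n)) (g : 𝒳 → ℝ≥0∞), Measurable g →
      ∫⁻ ω in {ω | Z i ω = true}, g (X i ω) ∂P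
        = ∫⁻ p : 𝒳 × Bool, g p.1 * q i p.1 ∂D := by
    intro i g hg
    have hXY : Measurable (fun ω => (X i ω, Y i ω)) := (hX i).prodMk (hY i)
    have hZs : MeasurableSet {ω | Z i ω = true} := hZ i (measurableSet_singleton true)
    have hmap : Measure.map (fun ω => (X i ω, Y i ω)) (P.restrict {ω | Z i ω = true})
        = D.withDensity (fun p => q i p.1) := by
      ext B hB
      rw [Measure.map_apply hXY hB, Measure.restrict_apply (hXY hB),
        withDensity_apply _ hB]
      exact hbern i B hB
    calc ∫⁻ ω in {ω | Z i ω = true}, g (X i ω) ∂P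
        = ∫⁻ p, g p.1 ∂(Measure.map (fun ω => (X i ω, Y i ω))
            (P.restrict {ω | Z i ω = true})) :=
          (lintegral_map (hg.comp measurable_fst) hXY).symm
      _ = ∫⁻ p : 𝒳 × Bool, g p.1 * q i p.1 ∂D := by
          rw [hmap, lintegral_withDensity_eq_lintegral_mul _
            (show Measurable fun p : 𝒳 × Bool => q i p.1 from
              (hqmeas i).comp measurable_fst)
            (show Measurable fun p : 𝒳 × Bool => g p.1 from hg.comp measurable_fst)]
          exact lintegral_congr fun p => mul_comm _ _
  -- rewrite each term as an indicator
  have hterm : ∀ (i : Fin (m + n)) (ω : Ω),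
      ((if h1 (X i ω) ≠ h2 (X i ω) ∧ Z i ω = true then (1 : ℝ≥0∞) else 0)
          / W (X i ω)) ^ 2
        = Set.indicator {ω | Z i ω = true}
            (fun ω => c (X i ω) / (W (X i ω)) ^ 2) ω := by
    intro i ω
    by_cases hz : Z i ω = true <;>
      by_cases hne : h1 (X i ω) = h2 (X i ω) <;>
        simp [Set.indicator, hz, hne, hcdef, div_eq_mul_inv, ← ENNReal.inv_pow, mul_pow]
  have hgmeas : Measurable (fun x => c x / (W x) ^ 2) :=
    hcmeas.div (hWmeas.pow_const 2)
  have htermmeas : ∀ i : Fin (m + n), Measurable (fun ω =>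
      Set.indicator {ω | Z i ω = true}
        (fun ω => c (X i ω) / (W (X i ω)) ^ 2) ω) := by
    intro i
    exact (hgmeas.comp (hX i)).indicator (hZ i (measurableSet_singleton true))
  -- sum of densities equals W
  have hsumq : ∀ x : 𝒳, ∑ i : Fin (m + n), q i x = W x := by
    intro x
    have hnn : ∀ i ∈ Finset.univ (α := Fin (m + n)),
        0 ≤ (if (i : ℕ) < m then Q0 x else Q1 x) := by
      intro i _
      by_cases h : (i : ℕ) < m <;> simp [h, (hQ0 x).1, (hQ1 x).1]
    rw [hqdef]
    rw [← ENNReal.ofReal_sum_of_nonneg hnn, hWdef]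
    congr 1
    rw [Fin.sum_univ_eq_sum_range (fun k => if k < m then Q0 x else Q1 x)]
    have hfil : (Finset.range (m + n)).filter (fun k => k < m) = Finset.range m := by
      ext k; simp; omega
    have hfil2 : (Finset.range (m + n)).filter (fun k => ¬ k < m)
        = Finset.range (m + n) \ Finset.range m := by
      ext k; simp
    rw [Finset.sum_ite, Finset.sum_const, Finset.sum_const, hfil, hfil2,
      Finset.card_sdiff_of_subset (by simp), Finset.card_range, Finset.card_range]
    simp [nsmul_eq_mul, Nat.add_sub_cancel_left]
  -- main calculation
  calc ∫⁻ ω, (∑ i : Fin (m + n),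
        ((if h1 (X i ω) ≠ h2 (X i ω) ∧ Z i ω = true then (1 : ℝ≥0∞) else 0)
          / W (X i ω)) ^ 2) ∂P
      = ∫⁻ ω, (∑ i : Fin (m + n), Set.indicator {ω | Z i ω = true}
          (fun ω => c (X i ω) / (W (X i ω)) ^ 2) ω) ∂P := by
        congr 1; funext ω; exact Finset.sum_congr rfl fun i _ => hterm i ω
    _ = ∑ i : Fin (m + n), ∫⁻ ω, Set.indicator {ω | Z i ω = true}
          (fun ω => c (X i ω) / (W (X i ω)) ^ 2) ω ∂P :=
        lintegral_finset_sum _ fun i _ => htermmeas i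
    _ = ∑ i : Fin (m + n), ∫⁻ p : 𝒳 × Bool, (c p.1 / (W p.1) ^ 2) * q i p.1 ∂D := by
        refine Finset.sum_congr rfl fun i _ => ?_
        rw [lintegral_indicator (show MeasurableSet {ω | Z i ω = true} from hZ i (measurableSet_singleton true))]
        exact key i _ hgmeas
    _ = ∫⁻ p : 𝒳 × Bool, ∑ i : Fin (m + n), (c p.1 / (W p.1) ^ 2) * q i p.1 ∂D :=
        (lintegral_finset_sum _ fun i _ =>
          (hgmeas.comp measurable_fst).mul ((hqmeas i).comp measurable_fst)).symm
    _ = ∫⁻ p : 𝒳 × Bool, c p.1 / W p.1 ∂D := by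
        refine lintegral_congr fun p => ?_
        rw [← Finset.mul_sum, hsumq, pow_two, div_eq_mul_inv,
          ENNReal.mul_inv (Or.inl (hWne p.1)) (Or.inl (hWfin p.1)), ← mul_assoc,
          mul_assoc (c p.1 * _), ENNReal.inv_mul_cancel (hWne p.1) (hWfin p.1),
          mul_one, ← div_eq_mul_inv]
    _ ≤ ∫⁻ p : 𝒳 × Bool, S * c p.1 ∂D := by
        refine lintegral_mono fun p => ?_
        by_cases h : h1 p.1 = h2 p.1
        · simp [hcdef, h, ENNReal.zero_div]
        · have h1le : c p.1 / W p.1 ≤ S := le_iSup (fun x => c x / W x) p.1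
          calc c p.1 / W p.1 ≤ S := h1le
            _ = S * c p.1 := by simp [hcdef, h]
    _ = S * ∫⁻ p : 𝒳 × Bool, c p.1 ∂D :=
        lintegral_const_mul S (hcmeas.comp measurable_fst)
    _ = S * D {p : 𝒳 × Bool | h1 p.1 ≠ h2 p.1} := by
        congr 1
        have : (fun p : 𝒳 × Bool => c p.1)
            = Set.indicator {p : 𝒳 × Bool | h1 p.1 ≠ h2 p.1} (fun _ => (1 : ℝ≥0∞)) := by
          funext p; by_cases h : h1 p.1 ≠ h2 p.1 <;> simp [hcdef, h, Set.indicator]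
        rw [this, lintegral_indicator hsmeas]
        simp
    _ = D {p : 𝒳 × Bool | h1 p.1 ≠ h2 p.1} * S := mul_comm _ _
end

section
/- Debiasing weight lower bound (core of Lemma B.3 of 'Active Learning with Logged Data'): Let 𝒳 be a set, Q0 : 𝒳 → [0,1] a function, D ⊆ 𝒳 a nonempty subset, and let α ≥ 1 and n > 0 be reals with m = α·n. Define ξ = inf_{x ∈ D} Q0(x) and the debiasing query policy Q(x) = 1 if Q0(x) ≤ ξ + 1/α and Q(x) = 0 otherwise. Then for every x ∈ D, m·Q0(x) + n·Q(x) ≥ m·ξ + n; consequently, for every x ∈ D, 1/(m·Q0(x) + n·Q(x)) ≤ sup_{x' ∈ D} 1/(m·Q0(x') + n). -/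
/-!
Points with `Q0 x ≤ ξ + 1/α` are queried and gain weight `n`, while the others already carry
logging weight `m·Q0 x > m·ξ + m/α = m·ξ + n`; either way the weight is at least `m·ξ + n`.
Since `t ↦ 1/(m·t + n)` is antitone and continuous on `[0, ∞)`, its value at the infimum `ξ`
is the supremum of its values over `D`.
-/

open Set

theorem mul_add_le_mul_add_mul_ite {m n ξ t q : ℝ} (hm : 0 ≤ m) (hξq : ξ ≤ q) (hn : n ≤ m * t) :
    m * ξ + n ≤ m * q + n * (if q ≤ ξ + t then 1 else 0) := by
  split_ifs with hq
  · nlinarith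
  · nlinarith [mul_le_mul_of_nonneg_left (not_le.mp hq).le hm]

theorem one_div_mul_iInf_add_eq_iSup {ι : Sort*} [Nonempty ι] {g : ι → ℝ} (hg : ∀ i, 0 ≤ g i)
    {m n : ℝ} (hm : 0 ≤ m) (hn : 0 < n) :
    1 / (m * (⨅ i, g i) + n) = ⨆ i, 1 / (m * g i + n) := by
  set f : ℝ → ℝ := fun t ↦ 1 / (m * t + n)
  have hf_anti : AntitoneOn f (Ici 0) := fun a ha b _ hab ↦
    one_div_le_one_div_of_le (by nlinarith [mem_Ici.mp ha]) (by nlinarith)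
  have hbdd : BddBelow (range g) := ⟨0, forall_mem_range.2 hg⟩
  have hf_cont : ContinuousAt f (⨅ i, g i) := by
    have : 0 < m * (⨅ i, g i) + n := by nlinarith [Real.iInf_nonneg hg]
    fun_prop (disch := exact this.ne')
  have := AntitoneOn.map_csInf_of_continuousWithinAt hf_cont.continuousWithinAt
    (hf_anti.mono (range_subset_iff.2 hg)) (range_nonempty g) hbdd
  rwa [← range_comp] at this

theorem debiasing_weight_lower_bound_general
    {𝒳 : Type*} (Q0 : 𝒳 → ℝ) (hQ0 : ∀ x, Q0 x ∈ Set.Icc (0 : ℝ) 1)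
    (D : Set 𝒳)
    (α n m : ℝ) (hα : 1 ≤ α) (hn : 0 < n) (hm : m = α * n)
    (ξ : ℝ) (hξ : ξ = ⨅ x : D, Q0 x)
    (Q : 𝒳 → ℝ) (hQ : ∀ x, Q x = if Q0 x ≤ ξ + 1 / α then (1 : ℝ) else 0) :
    (∀ x ∈ D, m * ξ + n ≤ m * Q0 x + n * Q x)
      ∧ (∀ x ∈ D, 1 / (m * Q0 x + n * Q x)
          ≤ ⨆ x' : D, 1 / (m * Q0 x' + n)) := by
  have hQ0_nonneg (x : D) : 0 ≤ Q0 x := (hQ0 x).1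
  have hα_pos : 0 < α := by linarith
  have hm_pos : 0 < m := hm ▸ mul_pos hα_pos hn
  have hξ_nonneg : 0 ≤ ξ := hξ ▸ Real.iInf_nonneg hQ0_nonneg
  have hweight : ∀ x ∈ D, m * ξ + n ≤ m * Q0 x + n * Q x := by
    intro x hx
    have hξ_le : ξ ≤ Q0 x := hξ ▸ ciInf_le ⟨0, forall_mem_range.2 hQ0_nonneg⟩ ⟨x, hx⟩
    rw [hQ x]
    exact mul_add_le_mul_add_mul_ite hm_pos.le hξ_le (by rw [hm]; field_simp; exact le_rfl)
  refine ⟨hweight, fun x hx ↦ ?_⟩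
  have : Nonempty D := ⟨⟨x, hx⟩⟩
  calc 1 / (m * Q0 x + n * Q x) ≤ 1 / (m * ξ + n) :=
        one_div_le_one_div_of_le (by positivity) (hweight x hx)
    _ = ⨆ x' : D, 1 / (m * Q0 x' + n) := by
        rw [hξ]; exact one_div_mul_iInf_add_eq_iSup hQ0_nonneg hm_pos.le hn

/-- **Debiasing weight lower bound** (core of Lemma B.3 of "Active Learning
with Logged Data"). For `Q0 : 𝒳 → [0,1]`, a nonempty `D ⊆ 𝒳`, reals `α ≥ 1`,
`n > 0`, `m = α·n`, `ξ = inf_{x ∈ D} Q0(x)` and the debiasing policy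
`Q(x) = 1{Q0(x) ≤ ξ + 1/α}`, we have for every `x ∈ D`:
`m·Q0(x) + n·Q(x) ≥ m·ξ + n`, and consequently
`1/(m·Q0(x) + n·Q(x)) ≤ sup_{x' ∈ D} 1/(m·Q0(x') + n)`. -/
theorem debiasing_weight_lower_bound
    {𝒳 : Type*} (Q0 : 𝒳 → ℝ) (hQ0 : ∀ x, Q0 x ∈ Set.Icc (0 : ℝ) 1)
    (D : Set 𝒳) (hD : D.Nonempty)
    (α n m : ℝ) (hα : 1 ≤ α) (hn : 0 < n) (hm : m = α * n)
    (ξ : ℝ) (hξ : ξ = ⨅ x : D, Q0 x)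
    (Q : 𝒳 → ℝ) (hQ : ∀ x, Q x = if Q0 x ≤ ξ + 1 / α then (1 : ℝ) else 0) :
    (∀ x ∈ D, m * ξ + n ≤ m * Q0 x + n * Q x)
      ∧ (∀ x ∈ D, 1 / (m * Q0 x + n * Q x)
          ≤ ⨆ x' : D, 1 / (m * Q0 x' + n)) :=
  debiasing_weight_lower_bound_general Q0 hQ0 D α n m hα hn hm ξ hξ Q hQ
end
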